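/- arXiv:1310.7570 — 3 statements merged into one kernel-verified Lean document; each statement's English description precedes it below -/
import Mathlib

section
/- The coefficients α_ℓ^{(n)}(z) solve the recurrence generated by the contiguous relations: for every k ∈ {3,4}, every n ≥ 0, and every z ∈ ℂ such that θ₁(2z|τ) ≠ 0, all θ₁-factors in the denominators of α_ℓ^{(n+1)}(z), α_ℓ^{(n)}(z±η) are nonzero, and θ_k(z+(n+1−2ℓ)η|τ/2) ≠ 0, one has: (i) for 1 ≤ ℓ ≤ n, α_ℓ^{(n+1)}(z) = (c_A/θ₁(2z|τ)) · [θ_k(z+(n+1)η|τ/2) α_ℓ^{(n)}(z+η) + θ_k(z−(n+1)η|τ/2) α_{ℓ−1}^{(n)}(z−η)] / θ_k(z+(n+1−2ℓ)η|τ/2); (ii) α_0^{(n+1)}(z) = (c_A/θ₁(2z|τ)) α_0^{(n)}(z+η); (iii) α_{n+1}^{(n+1)}(z) = (c_A/θ₁(2z|τ)) α_n^{(n)}(z−η). -/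
noncomputable section

open Complex BigOperators Finset

local notation "π" => (Real.pi : ℂ)

/-- Jacobi theta function θ₁(z|σ). -/
def theta1 (z σ : ℂ) : ℂ :=
  -∑' n : ℤ, Complex.exp (π * I * ((n : ℂ) + 1/2)^2 * σ) *
      Complex.exp (2 * π * I * ((n : ℂ) + 1/2) * (z + 1/2))

/-- Jacobi theta function θ₂(z|σ). -/
def theta2 (z σ : ℂ) : ℂ := theta1 (z + 1/2) σ

/-- Jacobi theta function θ₃(z|σ). -/
def theta3 (z σ : ℂ) : ℂ :=
  Complex.exp (π * I * σ / 4 + π * I * z) * theta2 (z + σ/2) σ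

/-- Jacobi theta function θ₄(z|σ). -/
def theta4 (z σ : ℂ) : ℂ := theta3 (z + 1/2) σ

/-- R(σ) = e^{-πiσ/4} / (i (e^{2πiσ}; e^{2πiσ})_∞). -/
def Rfun (σ : ℂ) : ℂ :=
  Complex.exp (-π * I * σ / 4) /
    (I * ∏' k : ℕ, (1 - Complex.exp (2 * π * I * σ * ((k : ℂ) + 1))))

def cA (τ η : ℂ) : ℂ := Complex.exp (π*I*η) / Rfun τ

def cB (τ η : ℂ) : ℂ := Complex.exp (π*I*τ/2) / Rfun (2*η)

/-- Elliptic binomial coefficient [n choose l]_{τ,2η}. -/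
def ebinom (τ η : ℂ) (n l : ℕ) : ℂ :=
  (∏ j ∈ Finset.range n, theta1 (2*η*((j:ℂ)+1)) τ) /
  ((∏ j ∈ Finset.range l, theta1 (2*η*((j:ℂ)+1)) τ) *
   (∏ j ∈ Finset.range (n-l), theta1 (2*η*((j:ℂ)+1)) τ))

/-- Coefficient α_l^{(n)}(z). -/
def alphaC (τ η : ℂ) (n l : ℕ) (z : ℂ) : ℂ :=
  (cA τ η)^n * ebinom τ η n l *
    theta1 (2*z + 2*η*((n:ℂ) - 2*l)) τ /
    ∏ j ∈ Finset.range (n+1), theta1 (2*z - 2*η*((l:ℂ) - (j:ℂ))) τ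

/-! Pairing the half-integer summation indices `m + 1/2`, `n + 1/2` of two θ₁-series into their
sum and difference gives the product formula
`θ₁(s+d|τ) θ₁(s-d|τ) = (θ₄(s|τ/2) θ₃(d|τ/2) - θ₃(s|τ/2) θ₄(d|τ/2)) / 2`.
Since θ₃ and θ₄ are even, it turns the three-term relation
`θₖ(z+u+v) θ₁(2v) θ₁(2z-2u) + θₖ(z-u-v) θ₁(2u) θ₁(2z+2v) = θₖ(z+v-u) θ₁(2u+2v) θ₁(2z)`
(θₖ at `τ/2`, θ₁ at `τ`) into a polynomial identity in values of θ₃ and θ₄.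
On the other side, `α_ℓ^{(n)}(z+η)` and `α_{ℓ-1}^{(n)}(z-η)` differ from `α_ℓ^{(n+1)}(z)` by a
single factor of the denominator and a single factor of the elliptic binomial coefficient, so the
recurrence is the three-term relation with `u = ℓη` and `v = (n+1-ℓ)η`. -/

theorem theta1_eq_jacobiTheta₂ (z σ : ℂ) :
    theta1 z σ = -(cexp (π*I*σ/4 + π*I*(z + 1/2)) * jacobiTheta₂ (z + 1/2 + σ/2) σ) := by
  rw [theta1, jacobiTheta₂, ← tsum_mul_left]
  congr 1
  refine tsum_congr fun n => ?_
  rw [jacobiTheta₂_term, ← Complex.exp_add, ← Complex.exp_add]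
  congr 1
  ring

theorem hasSum_theta1 {σ : ℂ} (hσ : 0 < σ.im) (z : ℂ) :
    HasSum (fun n : ℤ => cexp (π*I*σ*((n:ℂ) + 1/2)^2 + 2*π*I*((n:ℂ) + 1/2)*(z + 1/2)))
      (-theta1 z σ) := by
  rw [theta1_eq_jacobiTheta₂, neg_neg]
  refine ((hasSum_jacobiTheta₂_term _ hσ).mul_left _).congr_fun fun n => ?_
  rw [jacobiTheta₂_term, ← Complex.exp_add]
  congr 1
  ring

theorem theta3_eq_jacobiTheta₂ (z σ : ℂ) : theta3 z σ = jacobiTheta₂ z σ := by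
  rw [theta3, theta2, theta1_eq_jacobiTheta₂, show z + σ/2 + 1/2 + 1/2 + σ/2 = z + σ + 1 by ring,
    jacobiTheta₂_add_left, jacobiTheta₂_add_left', mul_neg, ← mul_assoc, ← mul_assoc,
    ← Complex.exp_add, ← Complex.exp_add]
  have : π*I*σ/4 + π*I*z + (π*I*σ/4 + π*I*(z + σ/2 + 1/2 + 1/2)) + -π*I*(σ + 2*z) = π*I := by
    ring
  rw [this, Complex.exp_pi_mul_I]
  ring

theorem theta4_eq_jacobiTheta₂ (z σ : ℂ) : theta4 z σ = jacobiTheta₂ (z + 1/2) σ := by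
  rw [theta4, theta3_eq_jacobiTheta₂]

theorem theta3_neg (z σ : ℂ) : theta3 (-z) σ = theta3 z σ := by
  simp only [theta3_eq_jacobiTheta₂, jacobiTheta₂_neg_left]

theorem theta4_neg (z σ : ℂ) : theta4 (-z) σ = theta4 z σ := by
  rw [theta4_eq_jacobiTheta₂, theta4_eq_jacobiTheta₂, show -z + 1/2 = -(z + 1/2 - 1) by ring,
    jacobiTheta₂_neg_left, ← jacobiTheta₂_add_left, sub_add_cancel]

theorem HasSum.mul_complex {ι κ : Type*} {f : ι → ℂ} {g : κ → ℂ} {a b : ℂ}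
    (hf : HasSum f a) (hg : HasSum g b) : HasSum (fun x : ι × κ => f x.1 * g x.2) (a * b) :=
  hf.mul hg (summable_mul_of_summable_norm (summable_norm_iff.mpr hf.summable)
    (summable_norm_iff.mpr hg.summable))

theorem theta1_mul_theta1 {τ : ℂ} (hτ : 0 < τ.im) {A B s d : ℂ}
    (hs : A + B = 2*s) (hd : A - B = 2*d) :
    theta1 A τ * theta1 B τ =
      (theta4 s (τ/2) * theta3 d (τ/2) - theta3 s (τ/2) * theta4 d (τ/2)) / 2 := by
  have hτ2 : 0 < (τ/2).im := by simpa using hτ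
  set T : ℤ → ℂ → ℂ := fun p w => jacobiTheta₂_term p w (τ/2) with hT
  set g : ℤ × ℤ → ℂ := fun x => (T x.1 (s + 1/2) * T x.2 d - T x.1 s * T x.2 (d + 1/2)) / 2
  have hg : HasSum g
      ((theta4 s (τ/2) * theta3 d (τ/2) - theta3 s (τ/2) * theta4 d (τ/2)) / 2) := by
    simp only [theta3_eq_jacobiTheta₂, theta4_eq_jacobiTheta₂]
    exact ((((hasSum_jacobiTheta₂_term _ hτ2).mul_complex (hasSum_jacobiTheta₂_term _ hτ2)).sub
      ((hasSum_jacobiTheta₂_term _ hτ2).mul_complex (hasSum_jacobiTheta₂_term _ hτ2))).div_const 2)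
  set e : ℤ × ℤ → ℤ × ℤ := fun x => (x.1 + x.2 + 1, x.1 - x.2)
  have he : e.Injective := by
    rintro ⟨m, n⟩ ⟨m', n'⟩ h
    simp only [e, Prod.mk.injEq] at h
    ext <;> omega
  have hg0 : ∀ x ∉ Set.range e, g x = 0 := by
    rintro ⟨p, q⟩ hx
    obtain ⟨k, hk⟩ : ∃ k, p + q = 2*k := ⟨(p + q)/2, by_contra fun h =>
      hx ⟨((p + q - 1)/2, (p - q - 1)/2), by simp only [e, Prod.mk.injEq]; omega⟩⟩
    have hk' : (p:ℂ) + q = 2*k := by exact_mod_cast hk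
    simp only [g, hT, jacobiTheta₂_term, ← Complex.exp_add, div_eq_zero_iff, sub_eq_zero]
    exact .inl (Complex.exp_eq_exp_iff_exists_int.mpr ⟨p - k, by
      push_cast; linear_combination (-π*I) * hk'⟩)
  have hge : g ∘ e = fun x => cexp (π*I*τ*((x.1:ℂ) + 1/2)^2 + 2*π*I*((x.1:ℂ) + 1/2)*(A + 1/2))
      * cexp (π*I*τ*((x.2:ℂ) + 1/2)^2 + 2*π*I*((x.2:ℂ) + 1/2)*(B + 1/2)) := by
    funext ⟨m, n⟩
    obtain rfl : A = s + d := by linear_combination (hs + hd)/2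
    obtain rfl : B = s - d := by linear_combination (hs - hd)/2
    have hsign : T (m+n+1) s * T (m-n) (d + 1/2) = -(T (m+n+1) (s + 1/2) * T (m-n) d) := by
      simp only [hT, jacobiTheta₂_term, ← Complex.exp_add]
      rw [← mul_neg_one, ← Complex.exp_pi_mul_I, ← Complex.exp_add]
      exact Complex.exp_eq_exp_iff_exists_int.mpr ⟨-n - 1, by push_cast; ring⟩
    have hterm : T (m+n+1) (s + 1/2) * T (m-n) d =
        cexp (π*I*τ*((m:ℂ) + 1/2)^2 + 2*π*I*((m:ℂ) + 1/2)*(s + d + 1/2))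
          * cexp (π*I*τ*((n:ℂ) + 1/2)^2 + 2*π*I*((n:ℂ) + 1/2)*(s - d + 1/2)) := by
      simp only [hT, jacobiTheta₂_term, ← Complex.exp_add]
      congr 1
      push_cast
      ring
    simp only [Function.comp, g, e, hsign, hterm]
    ring
  have hprod := (hasSum_theta1 hτ A).mul_complex (hasSum_theta1 hτ B)
  rw [neg_mul_neg, ← hge] at hprod
  exact hprod.unique ((he.hasSum_iff hg0).mpr hg)

theorem theta_three_term {τ : ℂ} (hτ : 0 < τ.im) {th : ℂ → ℂ → ℂ}
    (hth : th = theta3 ∨ th = theta4) (z u v : ℂ) :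
    th (z + (u + v)) (τ/2) * (theta1 (2*v) τ * theta1 (2*z - 2*u) τ)
      + th (z - (u + v)) (τ/2) * (theta1 (2*u) τ * theta1 (2*z + 2*v) τ)
      = th (z + (v - u)) (τ/2) * (theta1 (2*(u + v)) τ * theta1 (2*z) τ) := by
  rw [theta1_mul_theta1 hτ (s := z + (v - u)) (d := -(z - (u + v))) (by ring) (by ring),
    theta1_mul_theta1 hτ (s := z + (u + v)) (d := -(z + (v - u))) (by ring) (by ring),
    theta1_mul_theta1 hτ (s := z + (u + v)) (d := -(z - (u + v))) (by ring) (by ring)]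
  simp only [theta3_neg, theta4_neg]
  rcases hth with rfl | rfl <;> ring

theorem prod_range_shift_add (f : ℂ → ℂ) (n : ℕ) (z η a : ℂ) :
    (∏ j ∈ range (n+1), f (2*(z + η) - 2*η*(a - j))) * f (2*z - 2*η*a)
      = ∏ j ∈ range (n+1+1), f (2*z - 2*η*(a - j)) := by
  rw [prod_range_succ' _ (n+1)]
  push_cast
  ring_nf

theorem prod_range_shift_sub (f : ℂ → ℂ) (n : ℕ) (z η a : ℂ) :
    (∏ j ∈ range (n+1), f (2*(z - η) - 2*η*(a - j))) * f (2*z - 2*η*(a - n))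
      = ∏ j ∈ range (n+1+1), f (2*z - 2*η*(a + 1 - j)) := by
  rw [prod_range_succ _ (n+1)]
  push_cast
  ring_nf

section Recurrence

variable {τ η : ℂ} {n l : ℕ}

theorem ebinom_succ_mul (hl : l ≤ n) (h : theta1 (2*η*((n:ℂ) + 1 - l)) τ ≠ 0) :
    ebinom τ η (n+1) l * theta1 (2*η*((n:ℂ) + 1 - l)) τ
      = ebinom τ η n l * theta1 (2*η*((n:ℂ) + 1)) τ := by
  rw [ebinom, ebinom, show n + 1 - l = n - l + 1 by omega, prod_range_succ, prod_range_succ,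
    Nat.cast_sub hl, show (n:ℂ) - l + 1 = n + 1 - l by ring]
  field_simp

theorem ebinom_succ_succ_mul (h : theta1 (2*η*((l:ℂ) + 1)) τ ≠ 0) :
    ebinom τ η (n+1) (l+1) * theta1 (2*η*((l:ℂ) + 1)) τ
      = ebinom τ η n l * theta1 (2*η*((n:ℂ) + 1)) τ := by
  rw [ebinom, ebinom, show n + 1 - (l + 1) = n - l by omega, prod_range_succ, prod_range_succ]
  field_simp

theorem alphaC_shift_add {z : ℂ} (hl : l ≤ n) (hM : theta1 (2*η*((n:ℂ) + 1 - l)) τ ≠ 0)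
    (hz : theta1 (2*z - 2*η*l) τ ≠ 0) :
    cA τ η * theta1 (2*η*((n:ℂ) + 1)) τ * alphaC τ η n l (z + η)
      = theta1 (2*η*((n:ℂ) + 1 - l)) τ * theta1 (2*z - 2*η*l) τ * alphaC τ η (n+1) l z := by
  rw [alphaC, alphaC, ← prod_range_shift_add (theta1 · τ),
    show 2*(z + η) + 2*η*((n:ℂ) - 2*l) = 2*z + 2*η*(((n+1 : ℕ) : ℂ) - 2*l) by push_cast; ring]
  have hb := ebinom_succ_mul hl hM
  set X := theta1 (2*z + 2*η*(((n+1 : ℕ) : ℂ) - 2*l)) τ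
  set D := ∏ j ∈ range (n+1), theta1 (2*(z + η) - 2*η*((l:ℂ) - j)) τ
  set t := theta1 (2*z - 2*η*l) τ
  field_simp
  linear_combination -(cA τ η ^ (n+1) * X / D) * hb

theorem alphaC_shift_sub {z : ℂ} (hL : theta1 (2*η*((l:ℂ) + 1)) τ ≠ 0)
    (hz : theta1 (2*z - 2*η*((l:ℂ) - n)) τ ≠ 0) :
    cA τ η * theta1 (2*η*((n:ℂ) + 1)) τ * alphaC τ η n l (z - η)
      = theta1 (2*η*((l:ℂ) + 1)) τ * theta1 (2*z - 2*η*((l:ℂ) - n)) τ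
          * alphaC τ η (n+1) (l+1) z := by
  rw [alphaC, alphaC, Nat.cast_succ l, ← prod_range_shift_sub (theta1 · τ),
    show 2*(z - η) + 2*η*((n:ℂ) - 2*l) = 2*z + 2*η*(((n+1 : ℕ) : ℂ) - 2*(l + 1)) by push_cast; ring]
  have hb := ebinom_succ_succ_mul (n := n) hL
  set X := theta1 (2*z + 2*η*(((n+1 : ℕ) : ℂ) - 2*(l + 1))) τ
  set D := ∏ j ∈ range (n+1), theta1 (2*(z - η) - 2*η*((l:ℂ) - j)) τ
  set t := theta1 (2*z - 2*η*((l:ℂ) - n)) τ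
  field_simp
  linear_combination -(cA τ η ^ (n+1) * X / D) * hb

end Recurrence

theorem alpha_recurrence_general (τ η : ℂ) (hτ : 0 < τ.im)
    (th : ℂ → ℂ → ℂ) (hth : th = theta3 ∨ th = theta4)
    (n : ℕ) (z : ℂ) (hz : theta1 (2*z) τ ≠ 0)
    (hden : ∀ a : ℤ, -((n:ℤ)+1) ≤ a → a ≤ (n:ℤ)+1 →
        theta1 (2*z - 2*η*(a:ℂ)) τ ≠ 0 ∧ theta1 (2*(z+η) - 2*η*(a:ℂ)) τ ≠ 0 ∧
        theta1 (2*(z-η) - 2*η*(a:ℂ)) τ ≠ 0)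
    (hbin : ∀ j : ℕ, 1 ≤ j → j ≤ n+1 → theta1 (2*η*(j:ℂ)) τ ≠ 0) :
    (∀ l : ℕ, 1 ≤ l → l ≤ n → th (z + ((n:ℂ)+1-2*l)*η) (τ/2) ≠ 0 →
      alphaC τ η (n+1) l z = cA τ η / theta1 (2*z) τ *
        ((th (z + ((n:ℂ)+1)*η) (τ/2) * alphaC τ η n l (z+η)
          + th (z - ((n:ℂ)+1)*η) (τ/2) * alphaC τ η n (l-1) (z-η)) /
         th (z + ((n:ℂ)+1-2*l)*η) (τ/2))) ∧
    alphaC τ η (n+1) 0 z = cA τ η / theta1 (2*z) τ * alphaC τ η n 0 (z+η) ∧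
    alphaC τ η (n+1) (n+1) z = cA τ η / theta1 (2*z) τ * alphaC τ η n n (z-η) := by
  have hfac (l : ℕ) (hl : l ≤ n) : theta1 (2*η*((l:ℂ) + 1)) τ ≠ 0 := by
    simpa using hbin (l+1) (by omega) (by omega)
  have hcofac (l : ℕ) (hl : l ≤ n) : theta1 (2*η*((n:ℂ) + 1 - l)) τ ≠ 0 := by
    have := hbin (n+1-l) (by omega) (by omega)
    rwa [Nat.cast_sub (by omega), Nat.cast_succ] at this
  have hN := hfac n le_rfl
  refine ⟨fun l hl hln hH => ?_, ?_, ?_⟩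
  · obtain ⟨k, rfl⟩ : ∃ k, l = k + 1 := ⟨l - 1, by omega⟩
    set α := alphaC τ η (n+1) (k+1) z
    set H₁ := th (z + ((n:ℂ)+1)*η) (τ/2)
    set H₂ := th (z - ((n:ℂ)+1)*η) (τ/2)
    have h₁ := alphaC_shift_add (z := z) hln (hcofac _ hln)
      (by exact_mod_cast (hden (k+1) (by omega) (by omega)).1)
    have h₂ := alphaC_shift_sub (z := z) (hfac k (by omega))
      (by exact_mod_cast (hden ((k:ℤ) - n) (by omega) (by omega)).1)
    have hthree :
        H₁ * (theta1 (2*η*((n:ℂ) + 1 - ((k+1 : ℕ) : ℂ))) τ * theta1 (2*z - 2*η*((k+1 : ℕ) : ℂ)) τ)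
          + H₂ * (theta1 (2*η*((k:ℂ) + 1)) τ * theta1 (2*z - 2*η*((k:ℂ) - n)) τ)
        = th (z + ((n:ℂ)+1-2*((k+1 : ℕ) : ℂ))*η) (τ/2)
            * (theta1 (2*η*((n:ℂ) + 1)) τ * theta1 (2*z) τ) := by
      convert theta_three_term hτ hth z (((k:ℂ)+1)*η) (((n:ℂ)-k)*η) using 4 <;> push_cast <;>
        ring_nf
    rw [Nat.add_sub_cancel, mul_div_assoc', eq_div_iff hH, div_mul_eq_mul_div, eq_div_iff hz]
    apply mul_right_cancel₀ hN
    linear_combination -H₁ * h₁ - H₂ * h₂ - α * hthree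
  · have h := alphaC_shift_add (z := z) (l := 0) (Nat.zero_le n) (by simpa using hN)
      (by simpa using hz)
    simp only [Nat.cast_zero, sub_zero, mul_zero] at h
    rw [div_mul_eq_mul_div, eq_div_iff hz]
    apply mul_left_cancel₀ hN
    linear_combination -h
  · have h := alphaC_shift_sub (z := z) (n := n) (l := n) hN (by simpa using hz)
    simp only [sub_self, mul_zero, sub_zero] at h
    rw [div_mul_eq_mul_div, eq_div_iff hz]
    apply mul_left_cancel₀ hN
    linear_combination -h

/-- the coefficients α_l^{(n)} solve the recurrence of the contiguous relations. -/
theorem alpha_recurrence (τ η : ℂ) (hτ : 0 < τ.im) (hη : 0 < η.im)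
    (th : ℂ → ℂ → ℂ) (hth : th = theta3 ∨ th = theta4)
    (n : ℕ) (z : ℂ) (hz : theta1 (2*z) τ ≠ 0)
    (hden : ∀ a : ℤ, -((n:ℤ)+1) ≤ a → a ≤ (n:ℤ)+1 →
        theta1 (2*z - 2*η*(a:ℂ)) τ ≠ 0 ∧ theta1 (2*(z+η) - 2*η*(a:ℂ)) τ ≠ 0 ∧
        theta1 (2*(z-η) - 2*η*(a:ℂ)) τ ≠ 0)
    (hbin : ∀ j : ℕ, 1 ≤ j → j ≤ n+1 → theta1 (2*η*(j:ℂ)) τ ≠ 0) :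
    (∀ l : ℕ, 1 ≤ l → l ≤ n → th (z + ((n:ℂ)+1-2*l)*η) (τ/2) ≠ 0 →
      alphaC τ η (n+1) l z = cA τ η / theta1 (2*z) τ *
        ((th (z + ((n:ℂ)+1)*η) (τ/2) * alphaC τ η n l (z+η)
          + th (z - ((n:ℂ)+1)*η) (τ/2) * alphaC τ η n (l-1) (z-η)) /
         th (z + ((n:ℂ)+1-2*l)*η) (τ/2))) ∧
    alphaC τ η (n+1) 0 z = cA τ η / theta1 (2*z) τ * alphaC τ η n 0 (z+η) ∧
    alphaC τ η (n+1) (n+1) z = cA τ η / theta1 (2*z) τ * alphaC τ η n n (z-η) :=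
  alpha_recurrence_general τ η hτ th hth n z hz hden hbin
end
end

section
/- Conjugation property of the difference operators A_k under half-period shifts of the spin: for k ∈ {3,4}, every m ∈ ℤ, every g ∈ ℂ, every function f : ℂ → ℂ, and every z with θ₁(2z|τ) ≠ 0, one has [A_k(g+mτ/2)f](z) = (−1)^{m·δ_{k,4}} · e^{−πiτm²/2 − 2πim(g+η) + πimη} · e^{πimz²/η} · [A_k(g)(w ↦ e^{−πimw²/η} f(w))](z). -/
noncomputable section

open Complex BigOperators Finset

local notation "π" => (Real.pi : ℂ)

/-- The difference operator A_k(g), with θ_k given by `th`. -/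
def Aop (τ η : ℂ) (th : ℂ → ℂ → ℂ) (g : ℂ) (f : ℂ → ℂ) (z : ℂ) : ℂ :=
  (cA τ η / theta1 (2*z) τ) *
    (th (z+g+η) (τ/2) * Complex.exp (-2*π*I*z - π*I*η) * f (z+η)
     - th (z-g-η) (τ/2) * Complex.exp (2*π*I*z - π*I*η) * f (z-η))

lemma exp_congr_int (x y : ℂ) (k : ℤ) (h : x = y + (k:ℂ)*(2*π*I)) :
    Complex.exp x = Complex.exp y := by
  rw [h, Complex.exp_add, Complex.exp_int_mul_two_pi_mul_I, mul_one]

lemma theta1_shift (σ w : ℂ) (m : ℤ) :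
    theta1 (w + (m:ℂ)*σ) σ =
      Complex.exp (-(m:ℂ)*π*I - π*I*(m:ℂ)^2*σ - 2*π*I*(m:ℂ)*w) * theta1 w σ := by
  unfold theta1
  have key : ∀ n : ℤ,
      Complex.exp (π * I * ((n : ℂ) + 1/2)^2 * σ) *
        Complex.exp (2 * π * I * ((n : ℂ) + 1/2) * (w + (m:ℂ)*σ + 1/2))
      = Complex.exp (-(m:ℂ)*π*I - π*I*(m:ℂ)^2*σ - 2*π*I*(m:ℂ)*w) *
        (Complex.exp (π * I * (((n + m : ℤ) : ℂ) + 1/2)^2 * σ) *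
          Complex.exp (2 * π * I * (((n + m : ℤ) : ℂ) + 1/2) * (w + 1/2))) := by
    intro n
    rw [← Complex.exp_add, ← Complex.exp_add, ← Complex.exp_add]
    congr 1
    push_cast
    ring
  calc
    -∑' n : ℤ, Complex.exp (π * I * ((n : ℂ) + 1/2)^2 * σ) *
        Complex.exp (2 * π * I * ((n : ℂ) + 1/2) * (w + (m:ℂ)*σ + 1/2))
      = -∑' n : ℤ, Complex.exp (-(m:ℂ)*π*I - π*I*(m:ℂ)^2*σ - 2*π*I*(m:ℂ)*w) *
        (Complex.exp (π * I * (((n + m : ℤ) : ℂ) + 1/2)^2 * σ) *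
          Complex.exp (2 * π * I * (((n + m : ℤ) : ℂ) + 1/2) * (w + 1/2))) := by
        rw [tsum_congr key]
    _ = -∑' n : ℤ, Complex.exp (-(m:ℂ)*π*I - π*I*(m:ℂ)^2*σ - 2*π*I*(m:ℂ)*w) *
        (Complex.exp (π * I * ((n : ℂ) + 1/2)^2 * σ) *
          Complex.exp (2 * π * I * ((n : ℂ) + 1/2) * (w + 1/2))) := by
        congr 1
        exact (Equiv.addRight m).tsum_eq (fun k : ℤ =>
          Complex.exp (-(m:ℂ)*π*I - π*I*(m:ℂ)^2*σ - 2*π*I*(m:ℂ)*w) *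
          (Complex.exp (π * I * ((k : ℂ) + 1/2)^2 * σ) *
            Complex.exp (2 * π * I * ((k : ℂ) + 1/2) * (w + 1/2))))
    _ = Complex.exp (-(m:ℂ)*π*I - π*I*(m:ℂ)^2*σ - 2*π*I*(m:ℂ)*w) *
        -∑' n : ℤ, Complex.exp (π * I * ((n : ℂ) + 1/2)^2 * σ) *
          Complex.exp (2 * π * I * ((n : ℂ) + 1/2) * (w + 1/2)) := by
        rw [tsum_mul_left, mul_neg]

lemma theta3_shift (σ z : ℂ) (m : ℤ) :
    theta3 (z + (m:ℂ)*σ) σ =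
      Complex.exp (-π*I*(m:ℂ)^2*σ - 2*π*I*(m:ℂ)*z) * theta3 z σ := by
  unfold theta3 theta2
  rw [show z + (m:ℂ)*σ + σ/2 + 1/2 = (z + σ/2 + 1/2) + (m:ℂ)*σ from by ring,
    theta1_shift]
  have h : Complex.exp (π * I * σ / 4 + π * I * (z + (m:ℂ)*σ)) *
      Complex.exp (-(m:ℂ)*π*I - π*I*(m:ℂ)^2*σ - 2*π*I*(m:ℂ)*(z + σ/2 + 1/2))
      = Complex.exp (-π*I*(m:ℂ)^2*σ - 2*π*I*(m:ℂ)*z) *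
        Complex.exp (π * I * σ / 4 + π * I * z) := by
    rw [← Complex.exp_add, ← Complex.exp_add]
    exact exp_congr_int _ _ (-m) (by push_cast; ring)
  linear_combination theta1 (z + σ/2 + 1/2) σ * h

lemma theta4_shift (σ z : ℂ) (m : ℤ) :
    theta4 (z + (m:ℂ)*σ) σ =
      Complex.exp (-(m:ℂ)*π*I) *
        Complex.exp (-π*I*(m:ℂ)^2*σ - 2*π*I*(m:ℂ)*z) * theta4 z σ := by
  unfold theta4
  rw [show z + (m:ℂ)*σ + 1/2 = (z + 1/2) + (m:ℂ)*σ from by ring, theta3_shift]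
  have h : Complex.exp (-π*I*(m:ℂ)^2*σ - 2*π*I*(m:ℂ)*(z + 1/2))
      = Complex.exp (-(m:ℂ)*π*I) * Complex.exp (-π*I*(m:ℂ)^2*σ - 2*π*I*(m:ℂ)*z) := by
    rw [← Complex.exp_add]
    exact exp_congr_int _ _ 0 (by push_cast; ring)
  linear_combination theta3 (z + 1/2) σ * h

lemma neg_one_zpow_eq_exp (m : ℤ) : ((-1:ℂ))^m = Complex.exp (-(m:ℂ)*π*I) := by
  have h1 : Complex.exp (-(m:ℂ)*π*I) = Complex.exp (π*I) ^ (-m) := by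
    rw [← Complex.exp_int_mul]; congr 1; push_cast; ring
  rw [h1, Complex.exp_pi_mul_I, zpow_neg, ← inv_zpow, inv_neg, inv_one]


/-- conjugation of A_k under half-period shifts of the spin. -/
theorem Aop_halfperiod_conjugation (τ η : ℂ) (hτ : 0 < τ.im) (hη : 0 < η.im)
    (th : ℂ → ℂ → ℂ) (d : ℤ)
    (hth : (th = theta3 ∧ d = 0) ∨ (th = theta4 ∧ d = 1))
    (m : ℤ) (g : ℂ) (f : ℂ → ℂ) (z : ℂ) (hz : theta1 (2*z) τ ≠ 0) :
    Aop τ η th (g + (m:ℂ)*τ/2) f z =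
      (-1:ℂ)^(m*d) *
      Complex.exp (-π*I*τ*(m:ℂ)^2/2 - 2*π*I*(m:ℂ)*(g+η) + π*I*(m:ℂ)*η) *
      Complex.exp (π*I*(m:ℂ)*z^2/η) *
      Aop τ η th g (fun w => Complex.exp (-π*I*(m:ℂ)*w^2/η) * f w) z := by
  have hη0 : η ≠ 0 := by
    intro h; rw [h] at hη; simp at hη
  rcases hth with ⟨hth, hd⟩ | ⟨hth, hd⟩ <;> subst hth <;> subst hd
  · -- theta3 case
    simp only [Aop, mul_zero, zpow_zero, one_mul]
    rw [show z + (g + (m:ℂ)*τ/2) + η = (z + g + η) + (m:ℂ)*(τ/2) from by ring,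
      show z - (g + (m:ℂ)*τ/2) - η = (z - g - η) + ((-m : ℤ):ℂ)*(τ/2) from by
        push_cast; ring,
      theta3_shift, theta3_shift]
    have key1 : Complex.exp (-π*I*(m:ℂ)^2*(τ/2) - 2*π*I*(m:ℂ)*(z+g+η)) =
        Complex.exp (-π*I*τ*(m:ℂ)^2/2 - 2*π*I*(m:ℂ)*(g+η) + π*I*(m:ℂ)*η) *
        Complex.exp (π*I*(m:ℂ)*z^2/η) * Complex.exp (-π*I*(m:ℂ)*(z+η)^2/η) := by
      rw [← Complex.exp_add, ← Complex.exp_add]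
      exact exp_congr_int _ _ 0 (by push_cast; field_simp; ring)
    have key2 : Complex.exp (-π*I*((-m : ℤ):ℂ)^2*(τ/2) - 2*π*I*((-m : ℤ):ℂ)*(z-g-η)) =
        Complex.exp (-π*I*τ*(m:ℂ)^2/2 - 2*π*I*(m:ℂ)*(g+η) + π*I*(m:ℂ)*η) *
        Complex.exp (π*I*(m:ℂ)*z^2/η) * Complex.exp (-π*I*(m:ℂ)*(z-η)^2/η) := by
      rw [← Complex.exp_add, ← Complex.exp_add]
      exact exp_congr_int _ _ 0 (by push_cast; field_simp; ring)
    linear_combination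
      (cA τ η / theta1 (2*z) τ) * theta3 (z+g+η) (τ/2) *
        Complex.exp (-2*π*I*z - π*I*η) * f (z+η) * key1 -
      (cA τ η / theta1 (2*z) τ) * theta3 (z-g-η) (τ/2) *
        Complex.exp (2*π*I*z - π*I*η) * f (z-η) * key2
  · -- theta4 case
    simp only [Aop, mul_one]
    rw [show z + (g + (m:ℂ)*τ/2) + η = (z + g + η) + (m:ℂ)*(τ/2) from by ring,
      show z - (g + (m:ℂ)*τ/2) - η = (z - g - η) + ((-m : ℤ):ℂ)*(τ/2) from by
        push_cast; ring,
      theta4_shift, theta4_shift, neg_one_zpow_eq_exp]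
    have key1 : Complex.exp (-(m:ℂ)*π*I) *
        Complex.exp (-π*I*(m:ℂ)^2*(τ/2) - 2*π*I*(m:ℂ)*(z+g+η)) =
        Complex.exp (-(m:ℂ)*π*I) *
        (Complex.exp (-π*I*τ*(m:ℂ)^2/2 - 2*π*I*(m:ℂ)*(g+η) + π*I*(m:ℂ)*η) *
        Complex.exp (π*I*(m:ℂ)*z^2/η) * Complex.exp (-π*I*(m:ℂ)*(z+η)^2/η)) := by
      rw [← Complex.exp_add, ← Complex.exp_add, ← Complex.exp_add, ← Complex.exp_add]
      exact exp_congr_int _ _ 0 (by push_cast; field_simp; ring)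
    have key2 : Complex.exp (-((-m : ℤ):ℂ)*π*I) *
        Complex.exp (-π*I*((-m : ℤ):ℂ)^2*(τ/2) - 2*π*I*((-m : ℤ):ℂ)*(z-g-η)) =
        Complex.exp (-(m:ℂ)*π*I) *
        (Complex.exp (-π*I*τ*(m:ℂ)^2/2 - 2*π*I*(m:ℂ)*(g+η) + π*I*(m:ℂ)*η) *
        Complex.exp (π*I*(m:ℂ)*z^2/η) * Complex.exp (-π*I*(m:ℂ)*(z-η)^2/η)) := by
      rw [← Complex.exp_add, ← Complex.exp_add, ← Complex.exp_add, ← Complex.exp_add]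
      refine exp_congr_int _ _ m ?_
      push_cast; field_simp; ring
    linear_combination
      (cA τ η / theta1 (2*z) τ) * theta4 (z+g+η) (τ/2) *
        Complex.exp (-2*π*I*z - π*I*η) * f (z+η) * key1 -
      (cA τ η / theta1 (2*z) τ) * theta4 (z-g-η) (τ/2) *
        Complex.exp (2*π*I*z - π*I*η) * f (z-η) * key2
end
end

section
/- Normal-ordered form of the intertwiner on the two-index lattice: for all integers n, m ≥ 0, every function f : ℂ → ℂ, and every z ∈ ℂ at which all θ₁-factors in the denominators of the coefficients α_k^{(n)} and β_s^{(m)} appearing below are nonzero, one has e^{πimz²/η} · [M(nη)(w ↦ e^{−πimw²/η − 2πinw²/τ} · [M(mτ/2)(u ↦ e^{2πinu²/τ} f(u))](w))](z) = (−1)^{nm} ∑_{k=0}^{n} ∑_{s=0}^{m} (−1)^{k+s} α_k^{(n)}(z) β_s^{(m)}(z) E_{k,s}(z) f(z+(n−2k)η+(m−2s)τ/2). -/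
noncomputable section

open Complex BigOperators Finset

local notation "π" => (Real.pi : ℂ)

/-- Coefficient β_s^{(m)}(z). -/
def betaC (τ η : ℂ) (m s : ℕ) (z : ℂ) : ℂ :=
  (cB τ η)^m *
  ((∏ j ∈ Finset.range m, theta1 (τ*((j:ℂ)+1)) (2*η)) /
   ((∏ j ∈ Finset.range s, theta1 (τ*((j:ℂ)+1)) (2*η)) *
    (∏ j ∈ Finset.range (m-s), theta1 (τ*((j:ℂ)+1)) (2*η)))) *
    theta1 (2*z + τ*((m:ℂ) - 2*s)) (2*η) /
    ∏ j ∈ Finset.range (m+1), theta1 (2*z - τ*((s:ℂ) - (j:ℂ))) (2*η)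

/-- Phase factor E_{k,s}(z). -/
def Efac (τ η : ℂ) (n m k s : ℕ) (z : ℂ) : ℂ :=
  Complex.exp (((n:ℂ)-1)*((m:ℂ)-2*s)*(π*I*τ*((m:ℂ)-2*s)/2 + 2*π*I*(z+((n:ℂ)-2*k)*η))) *
  Complex.exp (((m:ℂ)-1)*((n:ℂ)-2*k)*(π*I*η*((n:ℂ)-2*k) + 2*π*I*(z+((m:ℂ)-2*s)*τ/2)))

/-- The finite-difference operator M(mτ/2). -/
def MtauOp (τ η : ℂ) (m : ℕ) (h : ℂ → ℂ) (z : ℂ) : ℂ :=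
  Complex.exp (2*π*I*z^2/τ) * ∑ s ∈ Finset.range (m+1), (-1:ℂ)^s * betaC τ η m s z *
    Complex.exp (-2*π*I*(z + ((m:ℂ)-2*s)*τ/2)^2/τ) * h (z + ((m:ℂ)-2*s)*τ/2)

/-- The finite-difference operator M(nη). -/
def MnetaOp (τ η : ℂ) (n : ℕ) (h : ℂ → ℂ) (z : ℂ) : ℂ :=
  Complex.exp (π*I*z^2/η) * ∑ k ∈ Finset.range (n+1), (-1:ℂ)^k * alphaC τ η n k z *
    Complex.exp (-π*I*(z + ((n:ℂ)-2*k)*η)^2/η) * h (z + ((n:ℂ)-2*k)*η)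

/-! Composing the two operators produces, in the (k, s) term, the coefficient β_s^{(m)} evaluated
at the shifted point z + (n-2k)η. Since 2·(n-2k)η is an integer multiple of the period 2η of
θ₁(·|2η), quasi-periodicity turns β_s^{(m)}(z + (n-2k)η) into β_s^{(m)}(z) times an explicit
exponential. All remaining factors are Gaussian exponentials, and their total exponent agrees
with that of (-1)^{nm} E_{k,s}(z) up to 2πi·mk. -/

lemma theta1_add_self (x σ : ℂ) :
    theta1 (x + σ) σ = exp (-π*I - π*I*σ - 2*π*I*x) * theta1 x σ := by
  unfold theta1
  rw [← Equiv.tsum_eq (Equiv.subRight (1:ℤ)), mul_neg, ← tsum_mul_left, neg_inj]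
  refine tsum_congr fun n => ?_
  simp only [Equiv.subRight_apply, ← exp_add]
  congr 1
  push_cast
  ring

lemma theta1_sub_self (x σ : ℂ) :
    theta1 (x - σ) σ = exp (π*I - π*I*σ + 2*π*I*x) * theta1 x σ := by
  rw [← sub_add_cancel x σ, theta1_add_self, ← mul_assoc, ← exp_add, add_sub_cancel_right]
  ring_nf
  rw [exp_zero, one_mul]

lemma theta1_add_int_mul (x σ : ℂ) (c : ℤ) :
    theta1 (x + c*σ) σ = exp (-π*I*c - π*I*σ*c^2 - 2*π*I*c*x) * theta1 x σ := by
  induction c using Int.induction_on with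
  | zero => simp
  | succ c ih =>
    push_cast at ih ⊢
    rw [show x + (c+1)*σ = (x + c*σ) + σ by ring, theta1_add_self, ih, ← mul_assoc, ← exp_add]
    congr 2
    ring
  | pred c ih =>
    push_cast at ih ⊢
    rw [show x + (-c-1)*σ = (x + -c*σ) - σ by ring, theta1_sub_self, ih, ← mul_assoc, ← exp_add]
    congr 2
    ring

lemma sum_range_affine (a b : ℂ) (N : ℕ) :
    ∑ j ∈ range N, (a + b*j) = N*a + b*(N*(N-1)/2) := by
  induction N with
  | zero => simp
  | succ N ih => rw [sum_range_succ, ih]; push_cast; ring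

lemma betaC_add_int_mul (τ η : ℂ) (m s : ℕ) (z : ℂ) (c : ℤ) :
    betaC τ η m s (z + c*η) =
      exp (π*I*m*c + 2*π*I*m*η*c^2 + 4*π*I*m*c*z + π*I*(m-1)*c*τ*(m-2*s)) *
        betaC τ η m s z := by
  have hnum : theta1 (2*(z + c*η) + τ*(m - 2*s)) (2*η) =
      exp (-π*I*c - π*I*(2*η)*c^2 - 2*π*I*c*(2*z + τ*(m-2*s))) *
        theta1 (2*z + τ*(m - 2*s)) (2*η) := by
    rw [← theta1_add_int_mul]
    ring_nf
  have hden : ∏ j ∈ range (m+1), theta1 (2*(z + c*η) - τ*(s - j)) (2*η) =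
      exp (∑ j ∈ range (m+1), ((-π*I*c - π*I*(2*η)*c^2 - 2*π*I*c*(2*z - τ*s)) +
          (-2*π*I*c*τ)*j)) *
        ∏ j ∈ range (m+1), theta1 (2*z - τ*(s - j)) (2*η) := by
    rw [exp_sum, ← prod_mul_distrib]
    refine prod_congr rfl fun j _ => ?_
    rw [show 2*(z + c*η) - τ*(s - j) = (2*z - τ*(s - j)) + c*(2*η) by ring,
      theta1_add_int_mul]
    ring_nf
  have hcollect : ∀ K B E₁ T E₂ P : ℂ, K * B * (E₁ * T) / (E₂ * P) = E₁ / E₂ * (K * B * T / P) :=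
    fun _ _ _ _ _ _ => by ring
  unfold betaC
  rw [hnum, hden, sum_range_affine, hcollect, ← exp_sub]
  congr 2
  push_cast
  ring

lemma normal_ordering_phase (τ η z : ℂ) (hτ : τ ≠ 0) (hη : η ≠ 0) (n m k s : ℕ) :
    let w := z + (n-2*k)*η
    let u := w + (m-2*s)*τ/2
    exp (π*I*m*z^2/η) * exp (π*I*z^2/η) * exp (-π*I*w^2/η) *
        exp (-π*I*m*w^2/η - 2*π*I*n*w^2/τ) * exp (2*π*I*w^2/τ) *
        exp (π*I*m*(n-2*k) + 2*π*I*m*η*(n-2*k)^2 + 4*π*I*m*(n-2*k)*z +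
          π*I*(m-1)*(n-2*k)*τ*(m-2*s)) *
        exp (-2*π*I*u^2/τ) * exp (2*π*I*n*u^2/τ) =
      (-1)^(n*m) * Efac τ η n m k s z := by
  intro w u
  have hw : w^2/η = z^2/η + 2*z*(n-2*k) + (n-2*k)^2*η := by
    field_simp; ring
  have hu : u^2/τ = w^2/τ + w*(m-2*s) + (m-2*s)^2*τ/4 := by
    field_simp; ring
  rw [Efac, ← exp_pi_mul_I, ← exp_nat_mul]
  simp only [← exp_add]
  rw [exp_eq_exp_iff_exists_int]
  refine ⟨-(m*k), ?_⟩
  push_cast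
  linear_combination (-π*I*(m+1))*hw + (2*π*I*(n-1))*hu

theorem normal_ordered_intertwiner_general (τ η : ℂ) (hτ : 0 < τ.im) (hη : 0 < η.im)
    (n m : ℕ) (f : ℂ → ℂ) (z : ℂ) :
    Complex.exp (π*I*(m:ℂ)*z^2/η) *
      MnetaOp τ η n (fun w => Complex.exp (-π*I*(m:ℂ)*w^2/η - 2*π*I*(n:ℂ)*w^2/τ) *
        MtauOp τ η m (fun u => Complex.exp (2*π*I*(n:ℂ)*u^2/τ) * f u) w) z
    = (-1:ℂ)^(n*m) * ∑ k ∈ Finset.range (n+1), ∑ s ∈ Finset.range (m+1),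
        (-1:ℂ)^(k+s) * alphaC τ η n k z * betaC τ η m s z * Efac τ η n m k s z *
        f (z + ((n:ℂ)-2*k)*η + ((m:ℂ)-2*s)*τ/2) := by
  have hτ0 : τ ≠ 0 := by rintro rfl; simp at hτ
  have hη0 : η ≠ 0 := by rintro rfl; simp at hη
  simp only [MnetaOp, MtauOp, mul_sum]
  refine sum_congr rfl fun k _ => sum_congr rfl fun s _ => ?_
  have hβ := betaC_add_int_mul τ η m s z (n - 2*k)
  push_cast at hβ
  have hphase := normal_ordering_phase τ η z hτ0 hη0 n m k s
  dsimp only at hphase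
  rw [hβ, pow_add]
  linear_combination (-1)^k * (-1)^s * alphaC τ η n k z * betaC τ η m s z *
    f (z + (n-2*k)*η + (m-2*s)*τ/2) * hphase

/-- normal-ordered form of the intertwiner on the two-index lattice. -/
theorem normal_ordered_intertwiner (τ η : ℂ) (hτ : 0 < τ.im) (hη : 0 < η.im)
    (n m : ℕ) (f : ℂ → ℂ) (z : ℂ)
    (hα : ∀ a : ℤ, |a| ≤ (n:ℤ) → theta1 (2*z - 2*η*(a:ℂ)) τ ≠ 0)
    (hαbin : ∀ i : ℕ, 1 ≤ i → i ≤ n → theta1 (2*η*(i:ℂ)) τ ≠ 0)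
    (hβ : ∀ k : ℕ, k ≤ n → ∀ a : ℤ, |a| ≤ (m:ℤ) →
        theta1 (2*(z + ((n:ℂ)-2*k)*η) - τ*(a:ℂ)) (2*η) ≠ 0)
    (hβz : ∀ a : ℤ, |a| ≤ (m:ℤ) → theta1 (2*z - τ*(a:ℂ)) (2*η) ≠ 0)
    (hβbin : ∀ i : ℕ, 1 ≤ i → i ≤ m → theta1 (τ*(i:ℂ)) (2*η) ≠ 0) :
    Complex.exp (π*I*(m:ℂ)*z^2/η) *
      MnetaOp τ η n (fun w => Complex.exp (-π*I*(m:ℂ)*w^2/η - 2*π*I*(n:ℂ)*w^2/τ) *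
        MtauOp τ η m (fun u => Complex.exp (2*π*I*(n:ℂ)*u^2/τ) * f u) w) z
    = (-1:ℂ)^(n*m) * ∑ k ∈ Finset.range (n+1), ∑ s ∈ Finset.range (m+1),
        (-1:ℂ)^(k+s) * alphaC τ η n k z * betaC τ η m s z * Efac τ η n m k s z *
        f (z + ((n:ℂ)-2*k)*η + ((m:ℂ)-2*s)*τ/2) :=
  normal_ordered_intertwiner_general τ η hτ hη n m f z
end
end
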